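/- Let G act on the right on N. For B ∈ Ω^2(N)^G and f ∈ (𝔤* ⊗ C^∞(N))^G, the BCWZ map Ψ sends the Cartan-exact equivariant 3-form d_G(B + f) to the total coboundary D(B + λ) in the de Rham complex of the transformation groupoid N ⋊ G ⇉ N; explicitly, Ψ(d_G(B+f)) = dB + ∂B + dλ, where λ(v_x, L_{g*}ξ) = f(Ad_g ξ)(x) and ∂ is the groupoid simplicial coboundary. In particular, Ψ maps exact equivariant 3-forms to coboundaries of Ω^3_{DR}((N ⋊ G)_•). -/

import Mathlib

open Manifold

section BCWZ

variable {𝔤 : Type*} [NormedAddCommGroup 𝔤] [NormedSpace ℝ 𝔤]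
  {G : Type*} [TopologicalSpace G] [ChartedSpace 𝔤 G] [Group G]
  [IsTopologicalGroup G] [LieGroup 𝓘(ℝ, 𝔤) (⊤ : ℕ∞) G]
  {E : Type*} [NormedAddCommGroup E] [NormedSpace ℝ E]
  {N : Type*} [TopologicalSpace N] [ChartedSpace E N]
  [IsManifold 𝓘(ℝ, E) (⊤ : ℕ∞) N]

/-- The adjoint action `Ad_g ξ`. -/
noncomputable def Adj (G : Type*) [TopologicalSpace G] [ChartedSpace 𝔤 G] [Group G]
    (g : G) (ξ : 𝔤) : 𝔤 :=
  mfderiv 𝓘(ℝ, 𝔤) 𝓘(ℝ, 𝔤) (fun h : G => g * h * g⁻¹) 1 ξ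

/-- Left translation `L_{g*} ξ` of `ξ ∈ 𝔤 = T₁G` to `T_g G ≅ 𝔤`. -/
noncomputable def leftTrans (G : Type*) [TopologicalSpace G] [ChartedSpace 𝔤 G] [Group G]
    (g : G) (ξ : 𝔤) : 𝔤 :=
  mfderiv 𝓘(ℝ, 𝔤) 𝓘(ℝ, 𝔤) (fun h : G => g * h) 1 ξ

/-- The fundamental vector field `ξ̂|_x` of a right action. -/
noncomputable def fundVF (a : N → G → N) (ξ : 𝔤) (x : N) : E :=
  mfderiv 𝓘(ℝ, 𝔤) 𝓘(ℝ, E) (a x) 1 ξ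

/-- The derivative `v ⋆ g` of the right translation `R_g = a · g : N → N`. -/
noncomputable def actDeriv (a : N → G → N) (g : G) (x : N) (v : E) : E :=
  mfderiv 𝓘(ℝ, E) 𝓘(ℝ, E) (fun y : N => a y g) x v

/-- The differential of a real function, evaluated on a tangent vector. -/
noncomputable def dfun (h : N → ℝ) (x : N) (v : E) : ℝ :=
  mfderiv 𝓘(ℝ, E) 𝓘(ℝ, ℝ) h x v

/-- First-variable derivative of a surface `σ : ℝ² → N × G`. -/
noncomputable def surfD₁ (σ : ℝ × ℝ → N × G) (q : ℝ × ℝ) : E × 𝔤 :=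
  mfderiv 𝓘(ℝ, ℝ) ((𝓘(ℝ, E)).prod 𝓘(ℝ, 𝔤)) (fun s => σ (s, q.2)) q.1 (1 : ℝ)

/-- Second-variable derivative of a surface `σ : ℝ² → N × G`. -/
noncomputable def surfD₂ (σ : ℝ × ℝ → N × G) (q : ℝ × ℝ) : E × 𝔤 :=
  mfderiv 𝓘(ℝ, ℝ) ((𝓘(ℝ, E)).prod 𝓘(ℝ, 𝔤)) (fun t => σ (q.1, t)) q.2 (1 : ℝ)

-- ===== Auxiliary machinery (added for the proof) =====

noncomputable def sR {F : Type*} [NormedAddCommGroup F] [NormedSpace ℝ F] (v : F) : ℝ →L[ℝ] F :=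
  (1 : ℝ →L[ℝ] ℝ).smulRight v

@[simp] lemma sR_apply {F : Type*} [NormedAddCommGroup F] [NormedSpace ℝ F] (v : F) (r : ℝ) :
    sR v r = r • v := by simp [sR]

section ChartAux

variable {F : Type*} [NormedAddCommGroup F] [NormedSpace ℝ F]
  {M : Type*} [TopologicalSpace M] [ChartedSpace F M]
  [IsManifold 𝓘(ℝ, F) (⊤ : ℕ∞) M]

omit [IsManifold 𝓘(ℝ, F) (⊤ : ℕ∞) M] in
lemma hasMFDerivAt_of_chart (p : M) (u : ℝ → F)
    (hu : ∀ s, u s ∈ (extChartAt 𝓘(ℝ, F) p).target)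
    (hu0 : u 0 = extChartAt 𝓘(ℝ, F) p p)
    (hcont : ContinuousAt (fun s => (extChartAt 𝓘(ℝ, F) p).symm (u s)) 0)
    {v : F} (hd : HasDerivAt u v 0) :
    HasMFDerivAt 𝓘(ℝ, ℝ) 𝓘(ℝ, F) (fun s => (extChartAt 𝓘(ℝ, F) p).symm (u s)) 0
      (sR v : ℝ →L[ℝ] F) := by
  have h0 : (extChartAt 𝓘(ℝ, F) p).symm (u 0) = p := by
    rw [hu0]; exact extChartAt_to_inv p
  refine ⟨hcont, ?_⟩
  have hwr : writtenInExtChartAt 𝓘(ℝ, ℝ) 𝓘(ℝ, F) 0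
      (fun s => (extChartAt 𝓘(ℝ, F) p).symm (u s)) = u := by
    funext s
    simp only [writtenInExtChartAt, Function.comp_apply, extChartAt_model_space_eq_id,
      PartialEquiv.refl_symm, PartialEquiv.refl_coe, id_eq, h0]
    exact (extChartAt 𝓘(ℝ, F) p).right_inv (hu s)
  rw [hwr]
  have : HasFDerivAt u (sR v) 0 := hasDerivAt_iff_hasFDerivAt.1 hd
  simp [extChartAt_model_space_eq_id, chartAt_self_eq, hasFDerivWithinAt_univ]
  exact this.hasFDerivWithinAt

lemma exists_surf (p : M) (v₁ v₂ : F) :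
    ∃ n : ℝ × ℝ → M,
      ContMDiff ((𝓘(ℝ, ℝ)).prod 𝓘(ℝ, ℝ)) 𝓘(ℝ, F) (⊤ : ℕ∞) n ∧
      n (0, 0) = p ∧
      HasMFDerivAt 𝓘(ℝ, ℝ) 𝓘(ℝ, F) (fun s => n (s, 0)) 0 (sR v₁ : ℝ →L[ℝ] F) ∧
      HasMFDerivAt 𝓘(ℝ, ℝ) 𝓘(ℝ, F) (fun t => n (0, t)) 0 (sR v₂ : ℝ →L[ℝ] F) := by
  obtain ⟨ε, hε, hball⟩ := Metric.mem_nhds_iff.1 (extChartAt_target_mem_nhds (I := 𝓘(ℝ, F)) p)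
  set e := extChartAt 𝓘(ℝ, F) p with he
  set S : ℝ := ‖v₁‖ + ‖v₂‖ with hS
  have hSnn : 0 ≤ S := by positivity
  set δ : ℝ := ε / (S + 1) with hδ
  have hδpos : 0 < δ := by positivity
  set ρ : ℝ → ℝ := fun s => s * (δ ^ 2 / (δ ^ 2 + s ^ 2)) with hρ
  have hden : ∀ s : ℝ, δ ^ 2 + s ^ 2 ≠ 0 := fun s => by positivity
  have hρcd : ContDiff ℝ (↑(⊤ : ℕ∞)) ρ :=
    contDiff_id.mul (contDiff_const.div (contDiff_const.add (contDiff_id.pow 2)) hden)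
  have hρ0 : ρ 0 = 0 := by simp [hρ]
  have hρd : HasDerivAt ρ 1 0 := by
    have h₁ : HasDerivAt (fun s : ℝ => δ ^ 2 + s ^ 2) 0 0 := by
      simpa using (hasDerivAt_pow 2 (0 : ℝ)).const_add (δ ^ 2)
    have h₂ : HasDerivAt (fun s : ℝ => δ ^ 2 / (δ ^ 2 + s ^ 2)) 0 0 := by
      simpa [Pi.div_def] using (hasDerivAt_const (0 : ℝ) (δ ^ 2)).div h₁ (hden 0)
    have h₃ := (hasDerivAt_id (0 : ℝ)).mul h₂
    convert h₃ using 1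
    · rfl
    · rfl
    · rfl
    have : δ ^ 2 ≠ 0 := pow_ne_zero 2 hδpos.ne'
    simp [div_self this]
  have hρbnd : ∀ s, |ρ s| ≤ δ / 2 := by
    intro s
    have hden' : (0 : ℝ) < δ ^ 2 + s ^ 2 := by positivity
    have hval : ρ s = s * δ ^ 2 / (δ ^ 2 + s ^ 2) := by rw [hρ]; ring
    rw [hval, abs_div, abs_of_pos hden', div_le_iff₀ hden', abs_mul,
      abs_of_pos (show (0 : ℝ) < δ ^ 2 by positivity)]
    nlinarith [sq_nonneg (|s| - δ), abs_nonneg s, sq_abs s,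
      mul_nonneg hδpos.le (sq_nonneg (|s| - δ))]
  set u : ℝ × ℝ → F := fun q => e p + ρ q.1 • v₁ + ρ q.2 • v₂ with hu
  have humem : ∀ q, u q ∈ e.target := by
    intro q
    apply hball
    rw [Metric.mem_ball, dist_eq_norm]
    have harg : u q - e p = ρ q.1 • v₁ + ρ q.2 • v₂ := by rw [hu]; simp only [add_assoc, add_sub_cancel_left]
    rw [harg]
    have h1 : ‖ρ q.1 • v₁ + ρ q.2 • v₂‖ ≤ |ρ q.1| * ‖v₁‖ + |ρ q.2| * ‖v₂‖ := by
      refine (norm_add_le _ _).trans ?_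
      simp [norm_smul, Real.norm_eq_abs, le_refl]
    have h2 : |ρ q.1| * ‖v₁‖ ≤ δ / 2 * ‖v₁‖ :=
      mul_le_mul_of_nonneg_right (hρbnd _) (norm_nonneg _)
    have h3 : |ρ q.2| * ‖v₂‖ ≤ δ / 2 * ‖v₂‖ :=
      mul_le_mul_of_nonneg_right (hρbnd _) (norm_nonneg _)
    have hδε : δ * (S + 1) = ε := by
      rw [hδ]; field_simp
    nlinarith [norm_nonneg v₁, norm_nonneg v₂]
  have hn : ContMDiff ((𝓘(ℝ, ℝ)).prod 𝓘(ℝ, ℝ)) 𝓘(ℝ, F) (⊤ : ℕ∞) (fun q => e.symm (u q)) := by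
    have hucm : ContMDiff ((𝓘(ℝ, ℝ)).prod 𝓘(ℝ, ℝ)) 𝓘(ℝ, F) (⊤ : ℕ∞) u := by
      refine (contMDiff_const.add ?_).add ?_
      · exact ((hρcd.contMDiff).comp contMDiff_fst).smul contMDiff_const
      · exact ((hρcd.contMDiff).comp contMDiff_snd).smul contMDiff_const
    exact (contMDiffOn_extChartAt_symm p).comp_contMDiff hucm humem
  have hu00 : u (0, 0) = e p := by simp [hu, hρ0]
  refine ⟨fun q => e.symm (u q), hn, ?_, ?_, ?_⟩
  · show e.symm (u (0, 0)) = p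
    rw [hu00, he]; exact extChartAt_to_inv p
  · refine hasMFDerivAt_of_chart p (fun s => u (s, 0)) (fun s => humem _)
      (by rw [← he]; exact hu00) ?_ ?_
    · have := (hn.comp ((contMDiff_id.prodMk contMDiff_const) :
        ContMDiff 𝓘(ℝ, ℝ) ((𝓘(ℝ, ℝ)).prod 𝓘(ℝ, ℝ)) (⊤ : ℕ∞) (fun s : ℝ => (s, (0 : ℝ))))).continuous
      exact this.continuousAt
    · have h := (hρd.smul_const v₁).const_add (e p)
      have h' := h.add_const (ρ 0 • v₂)
      rw [one_smul] at h'
      exact h'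
  · refine hasMFDerivAt_of_chart p (fun t => u (0, t)) (fun t => humem _)
      (by rw [← he]; exact hu00) ?_ ?_
    · have := (hn.comp ((contMDiff_const.prodMk contMDiff_id) :
        ContMDiff 𝓘(ℝ, ℝ) ((𝓘(ℝ, ℝ)).prod 𝓘(ℝ, ℝ)) (⊤ : ℕ∞) (fun t : ℝ => ((0 : ℝ), t)))).continuous
      exact this.continuousAt
    · have h := (hρd.smul_const v₂).const_add (e p + ρ 0 • v₁)
      rw [one_smul] at h
      exact h

end ChartAux

section DerivAux

variable {F₁ : Type*} [NormedAddCommGroup F₁] [NormedSpace ℝ F₁]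
  {M₁ : Type*} [TopologicalSpace M₁] [ChartedSpace F₁ M₁]
  {F₂ : Type*} [NormedAddCommGroup F₂] [NormedSpace ℝ F₂]
  {M₂ : Type*} [TopologicalSpace M₂] [ChartedSpace F₂ M₂]

lemma hasMFDerivAt_const' (c : M₁) :
    HasMFDerivAt 𝓘(ℝ, ℝ) 𝓘(ℝ, F₁) (fun _ : ℝ => c) 0 (sR (0 : F₁) : ℝ →L[ℝ] F₁) := by
  have h := hasMFDerivAt_const (I := 𝓘(ℝ, ℝ)) (I' := 𝓘(ℝ, F₁)) c (0 : ℝ)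
  have : (sR (0 : F₁) : ℝ →L[ℝ] F₁) = 0 := by ext; simp
  rw [this]
  exact h

lemma curve_comp {c : ℝ → M₁} {x : M₁} {ξ : F₁}
    (hc : HasMFDerivAt 𝓘(ℝ, ℝ) 𝓘(ℝ, F₁) c 0 (sR ξ : ℝ →L[ℝ] F₁)) (hc0 : c 0 = x)
    {Fm : M₁ → M₂} (hF : MDifferentiableAt 𝓘(ℝ, F₁) 𝓘(ℝ, F₂) Fm x) :
    HasMFDerivAt 𝓘(ℝ, ℝ) 𝓘(ℝ, F₂) (fun t => Fm (c t)) 0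
      (sR (mfderiv 𝓘(ℝ, F₁) 𝓘(ℝ, F₂) Fm x ξ) : ℝ →L[ℝ] F₂) := by
  subst hc0
  have h := HasMFDerivAt.comp (0 : ℝ) hF.hasMFDerivAt hc
  have heq : (mfderiv 𝓘(ℝ, F₁) 𝓘(ℝ, F₂) Fm (c 0)).comp (sR ξ : ℝ →L[ℝ] F₁)
      = (sR (mfderiv 𝓘(ℝ, F₁) 𝓘(ℝ, F₂) Fm (c 0) ξ) : ℝ →L[ℝ] F₂) := by
    ext
    show (mfderiv 𝓘(ℝ, F₁) 𝓘(ℝ, F₂) Fm (c 0)) ((1 : ℝ) • ξ)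
      = (1 : ℝ) • (mfderiv 𝓘(ℝ, F₁) 𝓘(ℝ, F₂) Fm (c 0)) ξ
    rw [one_smul, one_smul]
  exact h.congr_mfderiv heq

lemma mfderiv_pair_apply {c₁ : ℝ → M₁} {c₂ : ℝ → M₂} {w₁ : F₁} {w₂ : F₂}
    (h₁ : HasMFDerivAt 𝓘(ℝ, ℝ) 𝓘(ℝ, F₁) c₁ 0 (sR w₁ : ℝ →L[ℝ] F₁))
    (h₂ : HasMFDerivAt 𝓘(ℝ, ℝ) 𝓘(ℝ, F₂) c₂ 0 (sR w₂ : ℝ →L[ℝ] F₂)) :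
    mfderiv 𝓘(ℝ, ℝ) ((𝓘(ℝ, F₁)).prod 𝓘(ℝ, F₂)) (fun s => (c₁ s, c₂ s)) 0 (1 : ℝ)
      = (w₁, w₂) := by
  rw [MDifferentiableAt.mfderiv_prod h₁.mdifferentiableAt h₂.mdifferentiableAt,
    h₁.mfderiv, h₂.mfderiv]
  show ((sR w₁ : ℝ →L[ℝ] F₁).prod (sR w₂ : ℝ →L[ℝ] F₂)) 1 = (w₁, w₂)
  simp [ContinuousLinearMap.prod_apply]

lemma deriv_comp_curve {c : ℝ → M₁} {x : M₁} {ξ : F₁}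
    (hc : HasMFDerivAt 𝓘(ℝ, ℝ) 𝓘(ℝ, F₁) c 0 (sR ξ : ℝ →L[ℝ] F₁)) (hc0 : c 0 = x)
    {h : M₁ → ℝ} (hh : MDifferentiableAt 𝓘(ℝ, F₁) 𝓘(ℝ, ℝ) h x) :
    deriv (fun t => h (c t)) 0 = mfderiv 𝓘(ℝ, F₁) 𝓘(ℝ, ℝ) h x ξ := by
  have h1 := curve_comp hc hc0 hh
  have h2 : HasFDerivAt (fun t => h (c t))
      (sR (mfderiv 𝓘(ℝ, F₁) 𝓘(ℝ, ℝ) h x ξ) : ℝ →L[ℝ] ℝ) 0 :=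
    hasMFDerivAt_iff_hasFDerivAt.1 h1
  have h3 := h2.hasDerivAt
  rw [h3.deriv]
  exact one_smul ℝ _

end DerivAux

section AltAux

variable {V : Type*} [AddCommGroup V] [Module ℝ V]

lemma alt2_add_left (T : V [⋀^Fin 2]→ₗ[ℝ] ℝ) (a b c : V) :
    T ![a + b, c] = T ![a, c] + T ![b, c] := by
  have h : ∀ x : V, Function.update ![a, c] 0 x = ![x, c] := by
    intro x; funext i; fin_cases i <;> simp
  have h2 := T.toMultilinearMap.map_update_add ![a, c] 0 a b
  rw [h (a + b), h a, h b] at h2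
  exact h2

lemma alt2_add_right (T : V [⋀^Fin 2]→ₗ[ℝ] ℝ) (a b c : V) :
    T ![a, b + c] = T ![a, b] + T ![a, c] := by
  have h : ∀ x : V, Function.update ![a, b] 1 x = ![a, x] := by
    intro x; funext i; fin_cases i <;> simp
  have h2 := T.toMultilinearMap.map_update_add ![a, b] 1 b c
  rw [h (b + c), h b, h c] at h2
  exact h2

lemma alt2_swap (T : V [⋀^Fin 2]→ₗ[ℝ] ℝ) (a b : V) :
    T ![a, b] = - T ![b, a] := by
  have h := T.map_swap ![b, a] (show (0 : Fin 2) ≠ 1 by decide)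
  have h2 : (![b, a] ∘ Equiv.swap (0 : Fin 2) 1) = ![a, b] := by
    funext i; fin_cases i <;> simp [Equiv.swap_apply_def]
  rw [h2] at h
  rw [h]

end AltAux

section GroupAux

lemma smooth_conj (g : G) : ContMDiff 𝓘(ℝ, 𝔤) 𝓘(ℝ, 𝔤) (⊤ : ℕ∞) (fun k : G => g * k * g⁻¹) :=
  (contMDiff_const.mul contMDiff_id).mul contMDiff_const

lemma smooth_lmul (g : G) : ContMDiff 𝓘(ℝ, 𝔤) 𝓘(ℝ, 𝔤) (⊤ : ℕ∞) (fun k : G => g * k) :=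
  contMDiff_const.mul contMDiff_id

lemma smooth_lrmul (g h : G) : ContMDiff 𝓘(ℝ, 𝔤) 𝓘(ℝ, 𝔤) (⊤ : ℕ∞) (fun k : G => g * k * h) :=
  (contMDiff_const.mul contMDiff_id).mul contMDiff_const

lemma adj_zero (g : G) : Adj G g (0 : 𝔤) = 0 := (mfderiv _ _ _ _).map_zero

lemma leftTrans_zero (g : G) : leftTrans G g (0 : 𝔤) = 0 := (mfderiv _ _ _ _).map_zero

lemma adj_add (g : G) (u v : 𝔤) : Adj G g (u + v) = Adj G g u + Adj G g v :=
  (mfderiv _ _ _ _).map_add u v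

lemma adj_one (ξ : 𝔤) : Adj G (1 : G) ξ = ξ := by
  unfold Adj
  have h : (fun h : G => 1 * h * 1⁻¹) = id := by funext k; simp
  rw [h, mfderiv_id]
  rfl

lemma adj_comp (g h : G) (ξ : 𝔤) : Adj G g (Adj G h ξ) = Adj G (g * h) ξ := by
  have hcomp : (fun k : G => (g * h) * k * (g * h)⁻¹)
      = (fun k : G => g * k * g⁻¹) ∘ (fun k : G => h * k * h⁻¹) := by
    funext k
    simp [Function.comp, mul_assoc, mul_inv_rev]
  have hh : MDifferentiableAt 𝓘(ℝ, 𝔤) 𝓘(ℝ, 𝔤) (fun k : G => h * k * h⁻¹) 1 :=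
    (smooth_conj h).mdifferentiableAt (by simp)
  have hg : MDifferentiableAt 𝓘(ℝ, 𝔤) 𝓘(ℝ, 𝔤) (fun k : G => g * k * g⁻¹)
      ((fun k : G => h * k * h⁻¹) 1) := by
    have : (fun k : G => h * k * h⁻¹) 1 = 1 := by simp
    rw [this]
    exact (smooth_conj g).mdifferentiableAt (by simp)
  have hmf := mfderiv_comp (1 : G) hg hh
  unfold Adj
  rw [hcomp, hmf]
  have h1 : h * 1 * h⁻¹ = 1 := by simp
  rw [h1]
  rfl

lemma lrmul_deriv (g h : G) (ξ : 𝔤) :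
    mfderiv 𝓘(ℝ, 𝔤) 𝓘(ℝ, 𝔤) (fun k : G => g * k * h) 1 ξ
      = leftTrans G (g * h) (Adj G h⁻¹ ξ) := by
  have hcomp : (fun k : G => g * k * h)
      = (fun k : G => (g * h) * k) ∘ (fun k : G => h⁻¹ * k * h) := by
    funext k
    simp [Function.comp, mul_assoc]
  have hh : MDifferentiableAt 𝓘(ℝ, 𝔤) 𝓘(ℝ, 𝔤) (fun k : G => h⁻¹ * k * h) 1 :=
    (smooth_lrmul h⁻¹ h).mdifferentiableAt (by simp)
  have hg : MDifferentiableAt 𝓘(ℝ, 𝔤) 𝓘(ℝ, 𝔤) (fun k : G => (g * h) * k)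
      ((fun k : G => h⁻¹ * k * h) 1) := by
    have : (fun k : G => h⁻¹ * k * h) 1 = 1 := by simp
    rw [this]
    exact (smooth_lmul (g * h)).mdifferentiableAt (by simp)
  have hmf := mfderiv_comp (1 : G) hg hh
  unfold leftTrans Adj
  rw [inv_inv, hcomp, hmf]
  have h1 : h⁻¹ * 1 * h = 1 := by simp
  rw [h1]
  rfl

end GroupAux
/- STATEMENT 10: For `B ∈ Ω²(N)^G` and `f ∈ (𝔤* ⊗ C^∞(N))^G`, the BCWZ map `Ψ` sends
the Cartan-exact form `d_G(B + f)` to the total coboundary `D(B + λ)`: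
`Ψ(d_G(B+f)) = dB + ∂B + dλ`, where `λ(v_x, L_{g*}ξ) = f(Ad_g ξ)(x)`.
Since `d_G(B+f) = dB + (df − Q)` with `Q(ξ) = ι_{ξ̂}B`, and `Ψ` is the identity on the
invariant 3-form `dB`, the content is:
(i) the 2-form components agree: `Ψ(df − Q) = ∂B + dλ` on `N ⋊ G`, and
(ii) the 1-form component of `D(B+λ)` vanishes: `∂λ = 0`;
so `Ψ` maps exact equivariant 3-forms to coboundaries of `Ω³_{DR}((N ⋊ G)_•)`.
Here `dλ` is the 2-form `DΛ` characterized on surfaces, and `∂B` is evaluated using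
`s_*(v, L_{g*}ξ) = v`, `t_*(v, L_{g*}ξ) = v·g + ξ̂|_{x·g}`. -/
theorem bcwz_maps_exact_to_coboundary
    (a : N → G → N)
    (ha_one : ∀ x, a x 1 = x)
    (ha_mul : ∀ x g h, a (a x g) h = a x (g * h))
    (ha_smooth : ContMDiff ((𝓘(ℝ, E)).prod 𝓘(ℝ, 𝔤)) 𝓘(ℝ, E) (⊤ : ℕ∞)
      (fun p : N × G => a p.1 p.2))
    (B : N → (E [⋀^Fin 2]→ₗ[ℝ] ℝ))
    (hBinv : ∀ (g : G) (x : N) (v w : E),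
      B (a x g) ![actDeriv a g x v, actDeriv a g x w] = B x ![v, w])
    (f : 𝔤 →ₗ[ℝ] (N → ℝ))
    (hf_equiv : ∀ (g : G) (ξ : 𝔤) (x : N), f (Adj G g ξ) x = f ξ (a x g))
    (hf_smooth : ∀ ξ, ContMDiff 𝓘(ℝ, E) 𝓘(ℝ, ℝ) (⊤ : ℕ∞) (f ξ))
    -- the 1-form `λ` on `N × G` and its exterior derivative `DΛ = dλ`
    (Λ : N × G → ((E × 𝔤) →L[ℝ] ℝ))
    (hΛ : ∀ (x : N) (g : G) (v : E) (ξ : 𝔤),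
      Λ (x, g) (v, leftTrans G g ξ) = f (Adj G g ξ) x)
    (DΛ : N × G → ((E × 𝔤) [⋀^Fin 2]→ₗ[ℝ] ℝ))
    (hDΛ : ∀ σ : ℝ × ℝ → N × G,
      ContMDiff ((𝓘(ℝ, ℝ)).prod 𝓘(ℝ, ℝ)) ((𝓘(ℝ, E)).prod 𝓘(ℝ, 𝔤)) (⊤ : ℕ∞) σ →
      DΛ (σ (0, 0)) ![surfD₁ σ (0, 0), surfD₂ σ (0, 0)] =
        deriv (fun s => Λ (σ (s, 0)) (surfD₂ σ (s, 0))) 0 -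
          deriv (fun t => Λ (σ (0, t)) (surfD₁ σ (0, t))) 0) :
    -- (i) `Ψ(df − Q) = ∂B + dλ` as 2-forms on `N ⋊ G`
    (∀ (x : N) (g : G) (v₁ v₂ : E) (ξ₁ ξ₂ : 𝔤),
      ((dfun (E := E) (N := N) (f ξ₂) (a x g) (actDeriv a g x v₁)
          - B (a x g) ![fundVF a ξ₂ (a x g), actDeriv a g x v₁])
        - (dfun (E := E) (N := N) (f ξ₁) (a x g) (actDeriv a g x v₂)
          - B (a x g) ![fundVF a ξ₁ (a x g), actDeriv a g x v₂])
        + (dfun (E := E) (N := N) (f ξ₂) (a x g) (fundVF a ξ₁ (a x g))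
          - B (a x g) ![fundVF a ξ₂ (a x g), fundVF a ξ₁ (a x g)]))
      =
      (B (a x g) ![actDeriv a g x v₁ + fundVF a ξ₁ (a x g),
                   actDeriv a g x v₂ + fundVF a ξ₂ (a x g)]
          - B x ![v₁, v₂])
        + DΛ (x, g) ![(v₁, leftTrans G g ξ₁), (v₂, leftTrans G g ξ₂)]) ∧
    -- (ii) `∂λ = 0`
    (∀ (x : N) (g h : G) (ξ η : 𝔤),
      f (Adj G h η) (a x g) - f (Adj G (g * h) (Adj G h⁻¹ ξ + η)) x
        + f (Adj G g ξ) x = 0) := by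
  -- basic smoothness facts
  have hRg : ∀ g : G, ContMDiff 𝓘(ℝ, E) 𝓘(ℝ, E) (⊤ : ℕ∞) (fun y : N => a y g) := fun g =>
    ha_smooth.comp (contMDiff_id.prodMk contMDiff_const)
  have horb : ∀ x : N, ContMDiff 𝓘(ℝ, 𝔤) 𝓘(ℝ, E) (⊤ : ℕ∞) (fun k : G => a x k) := fun x =>
    ha_smooth.comp (contMDiff_const.prodMk contMDiff_id)
  -- vanishing of Λ on purely horizontal vectors
  have hΛ0 : ∀ (y : N) (g' : G) (w : E), Λ (y, g') (w, 0) = 0 := by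
    intro y g' w
    have h := hΛ y g' w 0
    rw [leftTrans_zero, adj_zero, map_zero] at h
    simpa using h
  -- equivariance of the differential of f
  have hdfun_equiv : ∀ (g : G) (ξ : 𝔤) (x : N) (v : E),
      dfun (E := E) (N := N) (f (Adj G g ξ)) x v
        = dfun (E := E) (N := N) (f ξ) (a x g) (actDeriv a g x v) := by
    intro g ξ x v
    have hfn : f (Adj G g ξ) = fun y => f ξ (a y g) := funext fun y => hf_equiv g ξ y
    have hcomp := mfderiv_comp (I := 𝓘(ℝ, E)) (I' := 𝓘(ℝ, E)) (I'' := 𝓘(ℝ, ℝ)) x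
      ((hf_smooth ξ).mdifferentiableAt (by simp)) (((hRg g)).mdifferentiableAt (by simp))
    unfold dfun actDeriv
    rw [hfn]
    rw [show (fun y => f ξ (a y g)) = (f ξ) ∘ (fun y : N => a y g) from rfl, hcomp]
    rfl
  constructor
  · -- part (i)
    intro x g v₁ v₂ ξ₁ ξ₂
    obtain ⟨n, hnsm, hn00, hn1, hn2⟩ := exists_surf (M := N) x v₁ v₂
    obtain ⟨m, hmsm, hm00, hm1, hm2⟩ := exists_surf (M := G) 1 ξ₁ ξ₂
    -- translated curves in G
    have hgc1 : ∀ g' : G, HasMFDerivAt 𝓘(ℝ, ℝ) 𝓘(ℝ, 𝔤) (fun s => g' * m (s, 0)) 0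
        (sR (leftTrans G g' ξ₁) : ℝ →L[ℝ] 𝔤) := fun g' =>
      curve_comp hm1 hm00 ((smooth_lmul g').mdifferentiableAt (by simp))
    have hgc2 : ∀ g' : G, HasMFDerivAt 𝓘(ℝ, ℝ) 𝓘(ℝ, 𝔤) (fun t => g' * m (0, t)) 0
        (sR (leftTrans G g' ξ₂) : ℝ →L[ℝ] 𝔤) := fun g' =>
      curve_comp hm2 hm00 ((smooth_lmul g').mdifferentiableAt (by simp))
    -- ==== piece A ====
    have pieceA : DΛ (x, g) ![((v₁ : E), (0 : 𝔤)), ((0 : E), leftTrans G g ξ₂)]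
        = dfun (E := E) (N := N) (f (Adj G g ξ₂)) x v₁ := by
      set σ : ℝ × ℝ → N × G := fun q => (n (q.1, 0), g * m (0, q.2)) with hσ
      have hσsm : ContMDiff ((𝓘(ℝ, ℝ)).prod 𝓘(ℝ, ℝ)) ((𝓘(ℝ, E)).prod 𝓘(ℝ, 𝔤)) (⊤ : ℕ∞) σ :=
        (hnsm.comp (contMDiff_fst.prodMk contMDiff_const)).prodMk
          (contMDiff_const.mul (hmsm.comp (contMDiff_const.prodMk contMDiff_snd)))
      have key := hDΛ σ hσsm
      have hσ00 : σ (0, 0) = (x, g) := by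
        show (n (0, 0), g * m (0, 0)) = (x, g)
        rw [hn00, hm00, mul_one]
      have hD1 : surfD₁ σ (0, 0) = ((v₁ : E), (0 : 𝔤)) := by
        show mfderiv 𝓘(ℝ, ℝ) ((𝓘(ℝ, E)).prod 𝓘(ℝ, 𝔤))
          (fun s => (n (s, 0), g * m (0, 0))) 0 (1 : ℝ) = _
        exact mfderiv_pair_apply hn1 (hasMFDerivAt_const' (g * m (0, 0)))
      have hD2 : surfD₂ σ (0, 0) = ((0 : E), leftTrans G g ξ₂) := by
        show mfderiv 𝓘(ℝ, ℝ) ((𝓘(ℝ, E)).prod 𝓘(ℝ, 𝔤))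
          (fun t => (n (0, 0), g * m (0, t))) 0 (1 : ℝ) = _
        exact mfderiv_pair_apply (hasMFDerivAt_const' (n (0, 0))) (hgc2 g)
      have hterm1 : (fun s => Λ (σ (s, 0)) (surfD₂ σ (s, 0)))
          = fun s => f (Adj G g ξ₂) (n (s, 0)) := by
        funext s
        have hD2s : surfD₂ σ (s, 0) = ((0 : E), leftTrans G g ξ₂) := by
          show mfderiv 𝓘(ℝ, ℝ) ((𝓘(ℝ, E)).prod 𝓘(ℝ, 𝔤))
            (fun t => (n (s, 0), g * m (0, t))) 0 (1 : ℝ) = _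
          exact mfderiv_pair_apply (hasMFDerivAt_const' (n (s, 0))) (hgc2 g)
        rw [hD2s]
        show Λ (n (s, 0), g * m (0, 0)) ((0 : E), leftTrans G g ξ₂) = _
        rw [hm00, mul_one]
        exact hΛ (n (s, 0)) g 0 ξ₂
      have hterm2 : (fun t => Λ (σ (0, t)) (surfD₁ σ (0, t))) = fun _ : ℝ => (0 : ℝ) := by
        funext t
        have hD1t : surfD₁ σ (0, t) = ((v₁ : E), (0 : 𝔤)) := by
          show mfderiv 𝓘(ℝ, ℝ) ((𝓘(ℝ, E)).prod 𝓘(ℝ, 𝔤))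
            (fun s => (n (s, 0), g * m (0, t))) 0 (1 : ℝ) = _
          exact mfderiv_pair_apply hn1 (hasMFDerivAt_const' (g * m (0, t)))
        rw [hD1t]
        show Λ (n (0, 0), g * m (0, t)) ((v₁ : E), (0 : 𝔤)) = 0
        exact hΛ0 _ _ _
      rw [hσ00, hD1, hD2, hterm1, hterm2] at key
      have hder := deriv_comp_curve hn1 hn00
        ((hf_smooth (Adj G g ξ₂)).mdifferentiableAt (by simp))
      rw [key, hder]
      simp [dfun]
      exact sub_zero _
    -- ==== piece B ====
    have pieceB : DΛ (x, g) ![((0 : E), leftTrans G g ξ₁), ((v₂ : E), (0 : 𝔤))]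
        = - dfun (E := E) (N := N) (f (Adj G g ξ₁)) x v₂ := by
      set σ : ℝ × ℝ → N × G := fun q => (n (0, q.2), g * m (q.1, 0)) with hσ
      have hσsm : ContMDiff ((𝓘(ℝ, ℝ)).prod 𝓘(ℝ, ℝ)) ((𝓘(ℝ, E)).prod 𝓘(ℝ, 𝔤)) (⊤ : ℕ∞) σ :=
        (hnsm.comp (contMDiff_const.prodMk contMDiff_snd)).prodMk
          (contMDiff_const.mul (hmsm.comp (contMDiff_fst.prodMk contMDiff_const)))
      have key := hDΛ σ hσsm
      have hσ00 : σ (0, 0) = (x, g) := by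
        show (n (0, 0), g * m (0, 0)) = (x, g)
        rw [hn00, hm00, mul_one]
      have hD1 : surfD₁ σ (0, 0) = ((0 : E), leftTrans G g ξ₁) := by
        show mfderiv 𝓘(ℝ, ℝ) ((𝓘(ℝ, E)).prod 𝓘(ℝ, 𝔤))
          (fun s => (n (0, 0), g * m (s, 0))) 0 (1 : ℝ) = _
        exact mfderiv_pair_apply (hasMFDerivAt_const' (n (0, 0))) (hgc1 g)
      have hD2 : surfD₂ σ (0, 0) = ((v₂ : E), (0 : 𝔤)) := by
        show mfderiv 𝓘(ℝ, ℝ) ((𝓘(ℝ, E)).prod 𝓘(ℝ, 𝔤))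
          (fun t => (n (0, t), g * m (0, 0))) 0 (1 : ℝ) = _
        exact mfderiv_pair_apply hn2 (hasMFDerivAt_const' (g * m (0, 0)))
      have hterm1 : (fun s => Λ (σ (s, 0)) (surfD₂ σ (s, 0))) = fun _ : ℝ => (0 : ℝ) := by
        funext s
        have hD2s : surfD₂ σ (s, 0) = ((v₂ : E), (0 : 𝔤)) := by
          show mfderiv 𝓘(ℝ, ℝ) ((𝓘(ℝ, E)).prod 𝓘(ℝ, 𝔤))
            (fun t => (n (0, t), g * m (s, 0))) 0 (1 : ℝ) = _
          exact mfderiv_pair_apply hn2 (hasMFDerivAt_const' (g * m (s, 0)))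
        rw [hD2s]
        show Λ (n (0, 0), g * m (s, 0)) ((v₂ : E), (0 : 𝔤)) = 0
        exact hΛ0 _ _ _
      have hterm2 : (fun t => Λ (σ (0, t)) (surfD₁ σ (0, t)))
          = fun t => f (Adj G g ξ₁) (n (0, t)) := by
        funext t
        have hD1t : surfD₁ σ (0, t) = ((0 : E), leftTrans G g ξ₁) := by
          show mfderiv 𝓘(ℝ, ℝ) ((𝓘(ℝ, E)).prod 𝓘(ℝ, 𝔤))
            (fun s => (n (0, t), g * m (s, 0))) 0 (1 : ℝ) = _
          exact mfderiv_pair_apply (hasMFDerivAt_const' (n (0, t))) (hgc1 g)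
        rw [hD1t]
        show Λ (n (0, t), g * m (0, 0)) ((0 : E), leftTrans G g ξ₁) = _
        rw [hm00, mul_one]
        exact hΛ (n (0, t)) g 0 ξ₁
      rw [hσ00, hD1, hD2, hterm1, hterm2] at key
      have hder := deriv_comp_curve hn2 hn00
        ((hf_smooth (Adj G g ξ₁)).mdifferentiableAt (by simp))
      rw [key, hder]
      simp [dfun]
      exact zero_sub _
    -- ==== piece C ====
    have pieceC : DΛ (x, g) ![((v₁ : E), (0 : 𝔤)), ((v₂ : E), (0 : 𝔤))] = 0 := by
      set σ : ℝ × ℝ → N × G := fun q => (n q, g) with hσ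
      have hσsm : ContMDiff ((𝓘(ℝ, ℝ)).prod 𝓘(ℝ, ℝ)) ((𝓘(ℝ, E)).prod 𝓘(ℝ, 𝔤)) (⊤ : ℕ∞) σ :=
        hnsm.prodMk contMDiff_const
      have key := hDΛ σ hσsm
      have hσ00 : σ (0, 0) = (x, g) := by
        show (n (0, 0), g) = (x, g)
        rw [hn00]
      have hD1 : surfD₁ σ (0, 0) = ((v₁ : E), (0 : 𝔤)) := by
        show mfderiv 𝓘(ℝ, ℝ) ((𝓘(ℝ, E)).prod 𝓘(ℝ, 𝔤))
          (fun s => (n (s, 0), g)) 0 (1 : ℝ) = _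
        exact mfderiv_pair_apply hn1 (hasMFDerivAt_const' g)
      have hD2 : surfD₂ σ (0, 0) = ((v₂ : E), (0 : 𝔤)) := by
        show mfderiv 𝓘(ℝ, ℝ) ((𝓘(ℝ, E)).prod 𝓘(ℝ, 𝔤))
          (fun t => (n (0, t), g)) 0 (1 : ℝ) = _
        exact mfderiv_pair_apply hn2 (hasMFDerivAt_const' g)
      have hterm1 : (fun s => Λ (σ (s, 0)) (surfD₂ σ (s, 0))) = fun _ : ℝ => (0 : ℝ) := by
        funext s
        have hsl : MDifferentiableAt 𝓘(ℝ, ℝ) 𝓘(ℝ, E) (fun t : ℝ => n (s, t)) 0 :=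
          ((hnsm.comp (contMDiff_const.prodMk contMDiff_id)).mdifferentiableAt (by simp))
        obtain ⟨w, hw⟩ : ∃ w : E, surfD₂ σ (s, 0) = (w, (0 : 𝔤)) := by
          refine ⟨mfderiv 𝓘(ℝ, ℝ) 𝓘(ℝ, E) (fun t : ℝ => n (s, t)) 0 (1 : ℝ), ?_⟩
          show mfderiv 𝓘(ℝ, ℝ) ((𝓘(ℝ, E)).prod 𝓘(ℝ, 𝔤))
            (fun t => (n (s, t), g)) 0 (1 : ℝ) = _
          rw [MDifferentiableAt.mfderiv_prod hsl (mdifferentiableAt_const), mfderiv_const]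
          rfl
        rw [hw]
        show Λ (n (s, 0), g) (w, (0 : 𝔤)) = 0
        exact hΛ0 _ _ _
      have hterm2 : (fun t => Λ (σ (0, t)) (surfD₁ σ (0, t))) = fun _ : ℝ => (0 : ℝ) := by
        funext t
        have hsl : MDifferentiableAt 𝓘(ℝ, ℝ) 𝓘(ℝ, E) (fun s : ℝ => n (s, t)) 0 :=
          ((hnsm.comp (contMDiff_id.prodMk contMDiff_const)).mdifferentiableAt (by simp))
        obtain ⟨w, hw⟩ : ∃ w : E, surfD₁ σ (0, t) = (w, (0 : 𝔤)) := by
          refine ⟨mfderiv 𝓘(ℝ, ℝ) 𝓘(ℝ, E) (fun s : ℝ => n (s, t)) 0 (1 : ℝ), ?_⟩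
          show mfderiv 𝓘(ℝ, ℝ) ((𝓘(ℝ, E)).prod 𝓘(ℝ, 𝔤))
            (fun s => (n (s, t), g)) 0 (1 : ℝ) = _
          rw [MDifferentiableAt.mfderiv_prod hsl (mdifferentiableAt_const), mfderiv_const]
          rfl
        rw [hw]
        show Λ (n (0, t), g) (w, (0 : 𝔤)) = 0
        exact hΛ0 _ _ _
      rw [hσ00, hD1, hD2, hterm1, hterm2] at key
      rw [key]
      simp
    -- ==== piece D ====
    have pieceD : DΛ (x, g) ![((0 : E), leftTrans G g ξ₁), ((0 : E), leftTrans G g ξ₂)]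
        = dfun (E := E) (N := N) (f ξ₂) (a x g) (fundVF a ξ₁ (a x g)) := by
      set σ : ℝ × ℝ → N × G := fun q => (x, g * m (q.1, 0) * m (0, q.2)) with hσ
      have hσsm : ContMDiff ((𝓘(ℝ, ℝ)).prod 𝓘(ℝ, ℝ)) ((𝓘(ℝ, E)).prod 𝓘(ℝ, 𝔤)) (⊤ : ℕ∞) σ :=
        contMDiff_const.prodMk
          ((contMDiff_const.mul (hmsm.comp (contMDiff_fst.prodMk contMDiff_const))).mul
            (hmsm.comp (contMDiff_const.prodMk contMDiff_snd)))
      have key := hDΛ σ hσsm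
      have hσ00 : σ (0, 0) = (x, g) := by
        show (x, g * m (0, 0) * m (0, 0)) = (x, g)
        rw [hm00, mul_one, mul_one]
      have hD1 : surfD₁ σ (0, 0) = ((0 : E), leftTrans G g ξ₁) := by
        have hG := curve_comp hm1 hm00 ((smooth_lrmul g (m (0, 0))).mdifferentiableAt (by simp))
        rw [lrmul_deriv g (m (0, 0)) ξ₁] at hG
        have h1 : surfD₁ σ (0, 0)
            = ((0 : E), leftTrans G (g * m (0, 0)) (Adj G (m (0, 0))⁻¹ ξ₁)) := by
          show mfderiv 𝓘(ℝ, ℝ) ((𝓘(ℝ, E)).prod 𝓘(ℝ, 𝔤))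
            (fun s => (x, g * m (s, 0) * m (0, 0))) 0 (1 : ℝ) = _
          exact mfderiv_pair_apply (hasMFDerivAt_const' x) hG
        rw [h1, hm00, mul_one, inv_one, adj_one]
      have hD2 : surfD₂ σ (0, 0) = ((0 : E), leftTrans G g ξ₂) := by
        have h1 : surfD₂ σ (0, 0) = ((0 : E), leftTrans G (g * m (0, 0)) ξ₂) := by
          show mfderiv 𝓘(ℝ, ℝ) ((𝓘(ℝ, E)).prod 𝓘(ℝ, 𝔤))
            (fun t => (x, g * m (0, 0) * m (0, t))) 0 (1 : ℝ) = _
          exact mfderiv_pair_apply (hasMFDerivAt_const' x) (hgc2 (g * m (0, 0)))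
        rw [h1, hm00, mul_one]
      have hterm1 : (fun s => Λ (σ (s, 0)) (surfD₂ σ (s, 0)))
          = fun s => f ξ₂ (a (a x g) (m (s, 0))) := by
        funext s
        have hD2s : surfD₂ σ (s, 0) = ((0 : E), leftTrans G (g * m (s, 0)) ξ₂) := by
          show mfderiv 𝓘(ℝ, ℝ) ((𝓘(ℝ, E)).prod 𝓘(ℝ, 𝔤))
            (fun t => (x, g * m (s, 0) * m (0, t))) 0 (1 : ℝ) = _
          exact mfderiv_pair_apply (hasMFDerivAt_const' x) (hgc2 (g * m (s, 0)))
        rw [hD2s]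
        show Λ (x, g * m (s, 0) * m (0, 0)) ((0 : E), leftTrans G (g * m (s, 0)) ξ₂) = _
        rw [hm00, mul_one, hΛ x (g * m (s, 0)) 0 ξ₂, hf_equiv, ← ha_mul]
      have hterm2 : (fun t => Λ (σ (0, t)) (surfD₁ σ (0, t)))
          = fun _ : ℝ => f (Adj G g ξ₁) x := by
        funext t
        have hG := curve_comp hm1 hm00 ((smooth_lrmul g (m (0, t))).mdifferentiableAt (by simp))
        rw [lrmul_deriv g (m (0, t)) ξ₁] at hG
        have hD1t : surfD₁ σ (0, t)
            = ((0 : E), leftTrans G (g * m (0, t)) (Adj G (m (0, t))⁻¹ ξ₁)) := by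
          show mfderiv 𝓘(ℝ, ℝ) ((𝓘(ℝ, E)).prod 𝓘(ℝ, 𝔤))
            (fun s => (x, g * m (s, 0) * m (0, t))) 0 (1 : ℝ) = _
          exact mfderiv_pair_apply (hasMFDerivAt_const' x) hG
        rw [hD1t]
        show Λ (x, g * m (0, 0) * m (0, t))
          ((0 : E), leftTrans G (g * m (0, t)) (Adj G (m (0, t))⁻¹ ξ₁)) = _
        rw [hm00, mul_one, hΛ x (g * m (0, t)) 0 (Adj G (m (0, t))⁻¹ ξ₁), adj_comp,
          mul_inv_cancel_right]
      rw [hσ00, hD1, hD2, hterm1, hterm2] at key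
      have hκ : HasMFDerivAt 𝓘(ℝ, ℝ) 𝓘(ℝ, E) (fun s => a (a x g) (m (s, 0))) 0
          (sR (fundVF a ξ₁ (a x g)) : ℝ →L[ℝ] E) :=
        curve_comp hm1 hm00 ((horb (a x g)).mdifferentiableAt (by simp))
      have hκ0 : a (a x g) (m (0, 0)) = a x g := by rw [hm00, ha_one]
      have hder := deriv_comp_curve hκ hκ0 ((hf_smooth ξ₂).mdifferentiableAt (by simp))
      rw [key, hder]
      simp [dfun]
      exact sub_zero _
    -- ==== assembly ====
    have e1 : ((v₁ : E), leftTrans G g ξ₁) = ((v₁ : E), (0 : 𝔤)) + ((0 : E), leftTrans G g ξ₁) := by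
      rw [Prod.mk_add_mk, add_zero, zero_add]
    have e2 : ((v₂ : E), leftTrans G g ξ₂) = ((v₂ : E), (0 : 𝔤)) + ((0 : E), leftTrans G g ξ₂) := by
      rw [Prod.mk_add_mk, add_zero, zero_add]
    have hDtot : DΛ (x, g) ![((v₁ : E), leftTrans G g ξ₁), ((v₂ : E), leftTrans G g ξ₂)]
        = dfun (E := E) (N := N) (f ξ₂) (a x g) (actDeriv a g x v₁)
          - dfun (E := E) (N := N) (f ξ₁) (a x g) (actDeriv a g x v₂)
          + dfun (E := E) (N := N) (f ξ₂) (a x g) (fundVF a ξ₁ (a x g)) := by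
      rw [e1, e2, alt2_add_left, alt2_add_right, alt2_add_right, pieceA, pieceB, pieceC, pieceD,
        hdfun_equiv, hdfun_equiv]
      ring
    -- expand the B-terms
    have hBexp : B (a x g) ![actDeriv a g x v₁ + fundVF a ξ₁ (a x g),
        actDeriv a g x v₂ + fundVF a ξ₂ (a x g)]
        = B x ![v₁, v₂]
          + B (a x g) ![actDeriv a g x v₁, fundVF a ξ₂ (a x g)]
          + B (a x g) ![fundVF a ξ₁ (a x g), actDeriv a g x v₂]
          + B (a x g) ![fundVF a ξ₁ (a x g), fundVF a ξ₂ (a x g)] := by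
      rw [alt2_add_left, alt2_add_right, alt2_add_right, hBinv]
      ring
    have s1 : B (a x g) ![fundVF a ξ₂ (a x g), actDeriv a g x v₁]
        = - B (a x g) ![actDeriv a g x v₁, fundVF a ξ₂ (a x g)] := alt2_swap _ _ _
    have s2 : B (a x g) ![fundVF a ξ₂ (a x g), fundVF a ξ₁ (a x g)]
        = - B (a x g) ![fundVF a ξ₁ (a x g), fundVF a ξ₂ (a x g)] := alt2_swap _ _ _
    rw [hDtot, hBexp, s1, s2]
    ring
  · -- part (ii)
    intro x g h ξ η
    have h1 : f (Adj G h η) (a x g) = f (Adj G (g * h) η) x := by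
      rw [← hf_equiv g (Adj G h η) x, adj_comp]
    have h2 : f (Adj G (g * h) (Adj G h⁻¹ ξ + η)) x
        = f (Adj G g ξ) x + f (Adj G (g * h) η) x := by
      rw [adj_add, map_add, Pi.add_apply, adj_comp, mul_inv_cancel_right]
    rw [h1, h2]
    ring

end BCWZ
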